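/- For the INMA(q1,q2) random field under the independence model, i.e., when additionally the components Z_{s,t;r}^{(i,j)}, 0 ≤ i ≤ q1, 0 ≤ j ≤ q2, within each vector Z_{s,t;r} are mutually independent, the autocovariance function satisfies, for every lag (k,l) ≠ (0,0) with 0 ≤ k ≤ q1 and 0 ≤ l ≤ q2, γ(k,l) := Cov(X_{s,t}, X_{s−k,t−l}) = σ_ε² · ∑_{i=k}^{q1} ∑_{j=l}^{q2} β_{i,j} β_{i−k,j−l}. (Example: independence model.) -/

import Mathlib

/-!
Writing `X s t = ∑_c β_c ∘ ε_{(s,t) - c}`, each thinning is a random sum `∑_{r < ε_p} Z_{p,r}`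
whose length is independent of its summands, so Wald-type identities give
`E[(β_c ∘ ε_p) (β_{c'} ∘ ε_{p'})] = E[ε_p ε_{p'}] β_c β_{c'}` as soon as `(p, c) ≠ (p', c')`:
for `p ≠ p'` because distinct counting vectors are independent, and for `p = p'`, `c ≠ c'`
because of the independence model. Since `E[ε_p ε_{p'}] = μ_ε² + σ_ε² [p = p']`, the covariance
is `σ_ε²` times the sum of `β_c β_{c'}` over the pairs of coefficients that hit the same
innovation, and for a lag `(k, l) ≠ (0, 0)` these are exactly the pairs `(c, c - (k, l))`.
-/

open MeasureTheory ProbabilityTheory Finset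

open scoped ENNReal

section RandomSum

variable {Ω : Type*} [MeasurableSpace Ω] {μ : Measure Ω}

theorem sum_range_eq_tsum_ite_mul (n : ℕ) (f : ℕ → ℝ≥0∞) :
    ∑ r ∈ range n, f r = ∑' r, (if r < n then 1 else 0) * f r := by
  rw [tsum_eq_sum (s := range n) fun r hr => by simp_all]
  exact sum_congr rfl fun r hr => by simp_all

theorem tsum_ite_lt (n : ℕ) : ∑' r, (if r < n then 1 else 0 : ℝ≥0∞) = n := by
  simpa using (sum_range_eq_tsum_ite_mul n 1).symm

theorem measurable_ite_lt {N : Ω → ℕ} (hN : Measurable N) (r : ℕ) :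
    Measurable fun ω => if r < N ω then (1 : ℝ≥0∞) else 0 :=
  (measurable_from_top (f := fun n : ℕ => if r < n then (1 : ℝ≥0∞) else 0)).comp hN

theorem measurable_sum_range {N : Ω → ℕ} {g : ℕ → Ω → ℕ} (hN : Measurable N)
    (hg : ∀ r, Measurable (g r)) : Measurable fun ω => ∑ r ∈ range (N ω), g r ω :=
  (measurable_from_prod_countable_left (f := fun x : Ω × ℕ => ∑ r ∈ range x.2, g r x.1)
    fun n => Finset.measurable_sum (range n) fun r _ => hg r).comp (measurable_id.prodMk hN)

theorem lintegral_tsum_mul_of_indepFun {ι : Type*} [Countable ι] {a g : ι → Ω → ℝ≥0∞}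
    {m : ℝ≥0∞} (ha : ∀ i, Measurable (a i)) (hg : ∀ i, Measurable (g i))
    (hindep : ∀ i, IndepFun (a i) (g i) μ) (hm : ∀ i, ∫⁻ ω, g i ω ∂μ = m) :
    ∫⁻ ω, ∑' i, a i ω * g i ω ∂μ = (∫⁻ ω, ∑' i, a i ω ∂μ) * m := by
  rw [lintegral_tsum fun i => ((ha i).fun_mul (hg i)).aemeasurable,
    lintegral_tsum fun i => (ha i).aemeasurable, ← ENNReal.tsum_mul_right]
  refine tsum_congr fun i => ?_
  rw [lintegral_mul_eq_lintegral_mul_lintegral_of_indepFun'' (ha i).aemeasurable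
    (hg i).aemeasurable (hindep i), hm i]

theorem lintegral_sum_range_of_indepFun {N : Ω → ℕ} {g : ℕ → Ω → ℝ≥0∞} {m : ℝ≥0∞}
    (hN : Measurable N) (hg : ∀ r, Measurable (g r)) (hindep : ∀ r, IndepFun N (g r) μ)
    (hm : ∀ r, ∫⁻ ω, g r ω ∂μ = m) :
    ∫⁻ ω, ∑ r ∈ range (N ω), g r ω ∂μ = (∫⁻ ω, (N ω : ℝ≥0∞) ∂μ) * m := by
  simp_rw [sum_range_eq_tsum_ite_mul, ← tsum_ite_lt]
  exact lintegral_tsum_mul_of_indepFun (measurable_ite_lt hN) hg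
    (fun r => (hindep r).comp (φ := fun n => if r < n then 1 else 0) measurable_from_top
      measurable_id) hm

theorem lintegral_sum_range_mul_sum_range_of_indepFun {N N' : Ω → ℕ} {g g' : ℕ → Ω → ℝ≥0∞}
    {m : ℝ≥0∞} (hN : Measurable N) (hN' : Measurable N') (hg : ∀ r, Measurable (g r))
    (hg' : ∀ r, Measurable (g' r))
    (hindep : ∀ r r', IndepFun (fun ω => (N ω, N' ω)) (fun ω => g r ω * g' r' ω) μ)
    (hm : ∀ r r', ∫⁻ ω, g r ω * g' r' ω ∂μ = m) :
    ∫⁻ ω, (∑ r ∈ range (N ω), g r ω) * ∑ r ∈ range (N' ω), g' r ω ∂μ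
      = (∫⁻ ω, (N ω * N' ω : ℝ≥0∞) ∂μ) * m := by
  have tsum_mul_tsum (a b : ℕ → ℝ≥0∞) :
      (∑' r, a r) * ∑' r', b r' = ∑' x : ℕ × ℕ, a x.1 * b x.2 := by
    rw [ENNReal.tsum_prod (f := fun r r' => a r * b r'), ← ENNReal.tsum_mul_right]
    exact tsum_congr fun r => ENNReal.tsum_mul_left.symm
  simp_rw [sum_range_eq_tsum_ite_mul, ← tsum_ite_lt, tsum_mul_tsum]
  refine (lintegral_congr fun ω => tsum_congr fun x => mul_mul_mul_comm _ _ _ _).trans ?_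
  exact lintegral_tsum_mul_of_indepFun
    (fun x => (measurable_ite_lt hN x.1).mul (measurable_ite_lt hN' x.2))
    (fun x => (hg x.1).mul (hg' x.2))
    (fun x => (hindep x.1 x.2).comp (φ := fun n : ℕ × ℕ =>
      (if x.1 < n.1 then (1 : ℝ≥0∞) else 0) * if x.2 < n.2 then 1 else 0)
      (measurable_of_countable _) measurable_id) fun x => hm x.1 x.2

end RandomSum

section NatValued

variable {Ω : Type*} [MeasurableSpace Ω] {μ : Measure Ω}

theorem lintegral_natCast_of_le_one {f : Ω → ℕ} (hf : Measurable f) (h01 : ∀ ω, f ω ≤ 1) :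
    ∫⁻ ω, (f ω : ℝ≥0∞) ∂μ = μ {ω | f ω = 1} := by
  have hind : (fun ω => (f ω : ℝ≥0∞)) = {ω | f ω = 1}.indicator 1 := by
    ext ω
    rcases Nat.le_one_iff_eq_zero_or_eq_one.1 (h01 ω) with h | h <;> simp [h]
  rw [hind]
  exact lintegral_indicator_one (hf (measurableSet_singleton 1))

theorem integral_natCast {f : Ω → ℕ} (hf : Measurable f) :
    ∫ ω, (f ω : ℝ) ∂μ = (∫⁻ ω, (f ω : ℝ≥0∞) ∂μ).toReal := by
  simp_rw [← ENNReal.toReal_natCast]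
  exact integral_toReal (measurable_from_top.comp hf).aemeasurable
    (ae_of_all _ fun ω => ENNReal.natCast_lt_top _)

theorem lintegral_natCast_ne_top {f : Ω → ℕ} (hf : Integrable (fun ω => (f ω : ℝ)) μ) :
    ∫⁻ ω, (f ω : ℝ≥0∞) ∂μ ≠ ⊤ := by
  simpa using hf.lintegral_lt_top.ne

theorem integral_natCast_sq {f : Ω → ℕ} (hf : Measurable f) :
    ∫ ω, (f ω : ℝ) ^ 2 ∂μ = (∫⁻ ω, (f ω : ℝ≥0∞) ^ 2 ∂μ).toReal := by
  have h := integral_natCast (μ := μ) (hf.pow_const 2)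
  simpa only [Nat.cast_pow] using h

theorem lintegral_natCast_sq_ne_top {f : Ω → ℕ}
    (hf2 : Integrable (fun ω => (f ω : ℝ) ^ 2) μ) : ∫⁻ ω, (f ω : ℝ≥0∞) ^ 2 ∂μ ≠ ⊤ := by
  have h := lintegral_natCast_ne_top (f := fun ω => f ω ^ 2) (μ := μ) (by push_cast; exact hf2)
  simpa only [Nat.cast_pow] using h

theorem lintegral_natCast_mul_of_indepFun {f g : Ω → ℕ} (hf : Measurable f) (hg : Measurable g)
    (hfg : IndepFun f g μ) :
    ∫⁻ ω, (f ω : ℝ≥0∞) * g ω ∂μ = (∫⁻ ω, (f ω : ℝ≥0∞) ∂μ) * ∫⁻ ω, (g ω : ℝ≥0∞) ∂μ :=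
  lintegral_mul_eq_lintegral_mul_lintegral_of_indepFun''
    (measurable_from_top.comp hf).aemeasurable (measurable_from_top.comp hg).aemeasurable
    (hfg.comp measurable_from_top measurable_from_top)

theorem lintegral_comp_eq_of_map_eq {f g : Ω → ℕ} (hf : Measurable f) (hg : Measurable g)
    (hfg : μ.map f = μ.map g) (φ : ℕ → ℝ≥0∞) : ∫⁻ ω, φ (f ω) ∂μ = ∫⁻ ω, φ (g ω) ∂μ :=
  (IdentDistrib.comp ⟨hf.aemeasurable, hg.aemeasurable, hfg⟩ measurable_from_top).lintegral_eq

theorem lintegral_natCast_mul_eq_ite {ι : Type*} [DecidableEq ι] {ε : ι → Ω → ℕ}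
    (hε : ∀ i, Measurable (ε i)) (hiid : iIndepFun ε μ) {i₀ : ι}
    (hid : ∀ i, μ.map (ε i) = μ.map (ε i₀)) (i j : ι) :
    ∫⁻ ω, (ε i ω : ℝ≥0∞) * ε j ω ∂μ
      = if i = j then ∫⁻ ω, (ε i₀ ω : ℝ≥0∞) ^ 2 ∂μ else (∫⁻ ω, (ε i₀ ω : ℝ≥0∞) ∂μ) ^ 2 := by
  have transfer (i : ι) := lintegral_comp_eq_of_map_eq (hε i) (hε i₀) (hid i)
  split_ifs with hij
  · subst hij
    simp_rw [← sq]
    exact transfer i fun n => (n : ℝ≥0∞) ^ 2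
  · rw [lintegral_natCast_mul_of_indepFun (hε i) (hε j) (hiid.indepFun hij),
      transfer i Nat.cast, transfer j Nat.cast, sq]

theorem lintegral_apply_mul_apply_of_iIndepFun {κ γ : Type*} {W : κ → Ω → γ → ℕ}
    (hW : ∀ k, Measurable (W k)) (hiid : iIndepFun W μ)
    (hcomp : ∀ k, iIndepFun (fun c ω => W k ω c) μ) {k k' : κ} {c c' : γ}
    (h : (k, c) ≠ (k', c')) :
    ∫⁻ ω, (W k ω c : ℝ≥0∞) * W k' ω c' ∂μ
      = (∫⁻ ω, (W k ω c : ℝ≥0∞) ∂μ) * ∫⁻ ω, (W k' ω c' : ℝ≥0∞) ∂μ := by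
  have hind : IndepFun (fun ω => W k ω c) (fun ω => W k' ω c') μ := by
    by_cases hk : k = k'
    · subst hk
      exact (hcomp k).indepFun fun hc => h (by rw [hc])
    · exact (hiid.indepFun hk).comp (measurable_pi_apply c) (measurable_pi_apply c')
  exact lintegral_natCast_mul_of_indepFun ((measurable_pi_apply c).comp (hW k))
    ((measurable_pi_apply c').comp (hW k')) hind

theorem integral_natCast_eq_sum_toReal {α : Type*} {f : Ω → ℕ} (hf : Measurable f)
    {S : Finset α} {a : α → ℝ≥0∞} (h : ∫⁻ ω, (f ω : ℝ≥0∞) ∂μ = ∑ x ∈ S, a x)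
    (ha : ∀ x ∈ S, a x ≠ ⊤) :
    ∫ ω, (f ω : ℝ) ∂μ = ∑ x ∈ S, (a x).toReal := by
  rw [integral_natCast hf, h, ENNReal.toReal_sum ha]

theorem memLp_two_natCast {f : Ω → ℕ} (hf : Measurable f)
    (hf2 : Integrable (fun ω => (f ω : ℝ) ^ 2) μ) : MemLp (fun ω => (f ω : ℝ)) 2 μ :=
  (memLp_two_iff_integrable_sq (measurable_from_top.comp hf).aestronglyMeasurable).2 hf2

end NatValued

theorem sum_ite_mul_sub_sum_mul_sum {α : Type*} (S T : Finset α) (P : α × α → Prop)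
    [DecidablePred P] (b : α → ℝ) (a v : ℝ) :
    ∑ x ∈ S ×ˢ T, (if P x then v else a ^ 2) * (b x.1 * b x.2)
        - (∑ c ∈ S, a * b c) * ∑ c ∈ T, a * b c
      = (v - a ^ 2) * ∑ x ∈ S ×ˢ T with P x, b x.1 * b x.2 := by
  rw [sum_mul_sum, ← sum_product', mul_sum, sum_filter, ← sum_sub_distrib]
  refine sum_congr rfl fun x _ => ?_
  split_ifs <;> ring

/-- `thinning ε Z (s, t) (i, j)` is the thinning `β_{ij} ∘_{s+i,t+j} ε_{s,t}`. -/
def thinning {Ω ι γ : Type*} (ε : ι → Ω → ℕ) (Z : ι → ℕ → Ω → γ → ℕ) (i : ι) (c : γ)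
    (ω : Ω) : ℕ :=
  ∑ r ∈ range (ε i ω), Z i r ω c

theorem natCast_thinning {Ω ι γ : Type*} (ε : ι → Ω → ℕ) (Z : ι → ℕ → Ω → γ → ℕ) (i : ι)
    (c : γ) (ω : Ω) :
    (thinning ε Z i c ω : ℝ≥0∞) = ∑ r ∈ range (ε i ω), (Z i r ω c : ℝ≥0∞) :=
  Nat.cast_sum _ _

section Thinning

variable {Ω ι γ : Type*} [MeasurableSpace Ω] {μ : Measure Ω} {ε : ι → Ω → ℕ}
  {Z : ι → ℕ → Ω → γ → ℕ}

theorem measurable_thinning (hε : ∀ i, Measurable (ε i)) (hZ : ∀ i r, Measurable (Z i r))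
    (i : ι) (c : γ) : Measurable (thinning ε Z i c) :=
  measurable_sum_range (hε i) fun r => (measurable_pi_apply c).comp (hZ i r)

theorem lintegral_thinning (hε : ∀ i, Measurable (ε i)) (hZ : ∀ i r, Measurable (Z i r))
    (hindep : IndepFun (fun ω i => ε i ω) (fun ω (ir : ι × ℕ) => Z ir.1 ir.2 ω) μ)
    {i : ι} {c : γ} {m : ℝ≥0∞} (hm : ∀ r, ∫⁻ ω, (Z i r ω c : ℝ≥0∞) ∂μ = m) :
    ∫⁻ ω, (thinning ε Z i c ω : ℝ≥0∞) ∂μ = (∫⁻ ω, (ε i ω : ℝ≥0∞) ∂μ) * m := by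
  simp_rw [natCast_thinning ε Z]
  exact lintegral_sum_range_of_indepFun (hε i)
    (fun r => measurable_from_top.comp ((measurable_pi_apply c).comp (hZ i r)))
    (fun r => hindep.comp (φ := fun x : ι → ℕ => x i)
      (ψ := fun x : ι × ℕ → γ → ℕ => (x (i, r) c : ℝ≥0∞))
      (by fun_prop) (by fun_prop)) hm

theorem lintegral_thinning_mul_thinning (hε : ∀ i, Measurable (ε i))
    (hZ : ∀ i r, Measurable (Z i r))
    (hindep : IndepFun (fun ω i => ε i ω) (fun ω (ir : ι × ℕ) => Z ir.1 ir.2 ω) μ)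
    (hZiid : iIndepFun (fun ir : ι × ℕ => Z ir.1 ir.2) μ)
    (hZcomp : ∀ i r, iIndepFun (fun c ω => Z i r ω c) μ)
    {i i' : ι} {c c' : γ} (h : i = i' → c ≠ c') {m m' : ℝ≥0∞}
    (hm : ∀ r, ∫⁻ ω, (Z i r ω c : ℝ≥0∞) ∂μ = m) (hm' : ∀ r, ∫⁻ ω, (Z i' r ω c' : ℝ≥0∞) ∂μ = m') :
    ∫⁻ ω, (thinning ε Z i c ω : ℝ≥0∞) * thinning ε Z i' c' ω ∂μ
      = (∫⁻ ω, (ε i ω : ℝ≥0∞) * ε i' ω ∂μ) * (m * m') := by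
  simp_rw [natCast_thinning ε Z]
  refine lintegral_sum_range_mul_sum_range_of_indepFun (hε i) (hε i')
    (fun r => measurable_from_top.comp ((measurable_pi_apply c).comp (hZ i r)))
    (fun r => measurable_from_top.comp ((measurable_pi_apply c').comp (hZ i' r)))
    (fun r r' => hindep.comp (φ := fun x : ι → ℕ => (x i, x i'))
      (ψ := fun x : ι × ℕ → γ → ℕ => (x (i, r) c : ℝ≥0∞) * x (i', r') c')
      (by fun_prop) (by fun_prop))
    fun r r' => ?_
  have hne : ((i, r), c) ≠ ((i', r'), c') := fun he => by simp_all
  rw [lintegral_apply_mul_apply_of_iIndepFun (W := fun ir : ι × ℕ => Z ir.1 ir.2)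
    (fun ir => hZ ir.1 ir.2) hZiid (fun ir => hZcomp ir.1 ir.2) hne, hm, hm']

theorem lintegral_sum_thinning (hε : ∀ i, Measurable (ε i)) (hZ : ∀ i r, Measurable (Z i r))
    (hindep : IndepFun (fun ω i => ε i ω) (fun ω (ir : ι × ℕ) => Z ir.1 ir.2 ω) μ)
    {S : Finset γ} (σ : γ → ι) {m : γ → ℝ≥0∞}
    (hm : ∀ c ∈ S, ∀ i r, ∫⁻ ω, (Z i r ω c : ℝ≥0∞) ∂μ = m c) :
    ∫⁻ ω, ((∑ c ∈ S, thinning ε Z (σ c) c ω : ℕ) : ℝ≥0∞) ∂μ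
      = ∑ c ∈ S, (∫⁻ ω, (ε (σ c) ω : ℝ≥0∞) ∂μ) * m c := by
  push_cast
  refine (lintegral_finsetSum _ fun c _ => ?_).trans (sum_congr rfl fun c hc => ?_)
  · exact measurable_from_top.comp (measurable_thinning hε hZ _ _)
  · exact lintegral_thinning hε hZ hindep (hm c hc _)

theorem lintegral_sum_thinning_mul_sum_thinning (hε : ∀ i, Measurable (ε i))
    (hZ : ∀ i r, Measurable (Z i r))
    (hindep : IndepFun (fun ω i => ε i ω) (fun ω (ir : ι × ℕ) => Z ir.1 ir.2 ω) μ)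
    (hZiid : iIndepFun (fun ir : ι × ℕ => Z ir.1 ir.2) μ)
    (hZcomp : ∀ i r, iIndepFun (fun c ω => Z i r ω c) μ)
    {S S' : Finset γ} (σ σ' : γ → ι) (hσ : ∀ c ∈ S, ∀ c' ∈ S', σ c = σ' c' → c ≠ c')
    {m : γ → ℝ≥0∞} (hm : ∀ c ∈ S, ∀ i r, ∫⁻ ω, (Z i r ω c : ℝ≥0∞) ∂μ = m c)
    (hm' : ∀ c ∈ S', ∀ i r, ∫⁻ ω, (Z i r ω c : ℝ≥0∞) ∂μ = m c) :
    ∫⁻ ω, (((∑ c ∈ S, thinning ε Z (σ c) c ω) * ∑ c ∈ S', thinning ε Z (σ' c) c ω : ℕ)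
        : ℝ≥0∞) ∂μ
      = ∑ x ∈ S ×ˢ S', (∫⁻ ω, (ε (σ x.1) ω : ℝ≥0∞) * ε (σ' x.2) ω ∂μ) * (m x.1 * m x.2) := by
  push_cast
  simp_rw [sum_mul_sum, ← sum_product']
  refine (lintegral_finsetSum _ fun x _ => ?_).trans (sum_congr rfl fun x hx => ?_)
  · exact (measurable_from_top.comp (measurable_thinning hε hZ (σ x.1) x.1)).fun_mul
      (measurable_from_top.comp (measurable_thinning hε hZ (σ' x.2) x.2))
  rw [mem_product] at hx
  exact lintegral_thinning_mul_thinning hε hZ hindep hZiid hZcomp (hσ _ hx.1 _ hx.2)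
    (hm _ hx.1 _) (hm' _ hx.2 _)

theorem integral_sum_thinning (hε : ∀ i, Measurable (ε i)) (hZ : ∀ i r, Measurable (Z i r))
    (hindep : IndepFun (fun ω i => ε i ω) (fun ω (ir : ι × ℕ) => Z ir.1 ir.2 ω) μ) {i₀ : ι}
    (hid : ∀ i, μ.map (ε i) = μ.map (ε i₀)) (hε₁ : Integrable (fun ω => (ε i₀ ω : ℝ)) μ)
    {S : Finset γ} (σ : γ → ι) {m : γ → ℝ≥0∞}
    (hm : ∀ c ∈ S, ∀ i r, ∫⁻ ω, (Z i r ω c : ℝ≥0∞) ∂μ = m c) (hm_top : ∀ c, m c ≠ ⊤) :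
    ∫ ω, ((∑ c ∈ S, thinning ε Z (σ c) c ω : ℕ) : ℝ) ∂μ
      = ∑ c ∈ S, (∫ ω, (ε i₀ ω : ℝ) ∂μ) * (m c).toReal := by
  have hmean (i : ι) := lintegral_comp_eq_of_map_eq (hε i) (hε i₀) (hid i) Nat.cast
  rw [integral_natCast_eq_sum_toReal
    (Finset.measurable_sum _ fun c _ => measurable_thinning hε hZ _ _)
    (lintegral_sum_thinning hε hZ hindep σ hm) fun c hc =>
      ENNReal.mul_ne_top (by rw [hmean]; exact lintegral_natCast_ne_top hε₁) (hm_top c),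
    integral_natCast (hε i₀)]
  simp only [hmean, ENNReal.toReal_mul]

theorem integral_sum_thinning_mul_sum_thinning [IsFiniteMeasure μ] [DecidableEq ι]
    (hε : ∀ i, Measurable (ε i)) (hεiid : iIndepFun ε μ) {i₀ : ι}
    (hid : ∀ i, μ.map (ε i) = μ.map (ε i₀)) (hε₂ : Integrable (fun ω => (ε i₀ ω : ℝ) ^ 2) μ)
    (hZ : ∀ i r, Measurable (Z i r))
    (hindep : IndepFun (fun ω i => ε i ω) (fun ω (ir : ι × ℕ) => Z ir.1 ir.2 ω) μ)
    (hZiid : iIndepFun (fun ir : ι × ℕ => Z ir.1 ir.2) μ)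
    (hZcomp : ∀ i r, iIndepFun (fun c ω => Z i r ω c) μ)
    {S S' : Finset γ} (σ σ' : γ → ι) (hσ : ∀ c ∈ S, ∀ c' ∈ S', σ c = σ' c' → c ≠ c')
    {m : γ → ℝ≥0∞} (hm : ∀ c ∈ S, ∀ i r, ∫⁻ ω, (Z i r ω c : ℝ≥0∞) ∂μ = m c)
    (hm' : ∀ c ∈ S', ∀ i r, ∫⁻ ω, (Z i r ω c : ℝ≥0∞) ∂μ = m c)
    (hm_top : ∀ c, m c ≠ ⊤) :
    ∫ ω, ((∑ c ∈ S, thinning ε Z (σ c) c ω : ℕ) : ℝ)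
        * ((∑ c ∈ S', thinning ε Z (σ' c) c ω : ℕ) : ℝ) ∂μ
      = ∑ x ∈ S ×ˢ S', (if σ x.1 = σ' x.2 then ∫ ω, (ε i₀ ω : ℝ) ^ 2 ∂μ
          else (∫ ω, (ε i₀ ω : ℝ) ∂μ) ^ 2) * ((m x.1).toReal * (m x.2).toReal) := by
  have hA := lintegral_natCast_ne_top ((memLp_two_natCast (hε i₀) hε₂).integrable one_le_two)
  have hsq := lintegral_natCast_sq_ne_top hε₂
  have h := integral_natCast_eq_sum_toReal
    ((Finset.measurable_sum _ fun c _ => measurable_thinning hε hZ _ _).fun_mul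
      (Finset.measurable_sum _ fun c _ => measurable_thinning hε hZ _ _))
    (lintegral_sum_thinning_mul_sum_thinning hε hZ hindep hZiid hZcomp σ σ' hσ hm hm')
    fun x _ => by
      have := hm_top x.1
      have := hm_top x.2
      rw [lintegral_natCast_mul_eq_ite hε hεiid hid]
      split_ifs <;> finiteness
  simp only [Nat.cast_mul] at h
  rw [h]
  refine sum_congr rfl fun x _ => ?_
  rw [lintegral_natCast_mul_eq_ite hε hεiid hid, ENNReal.toReal_mul, ENNReal.toReal_mul,
    apply_ite ENNReal.toReal, ENNReal.toReal_pow, integral_natCast (hε i₀),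
    integral_natCast_sq (hε i₀)]

theorem covariance_sum_thinning [IsProbabilityMeasure μ] [DecidableEq ι]
    (hε : ∀ i, Measurable (ε i)) (hεiid : iIndepFun ε μ) {i₀ : ι}
    (hid : ∀ i, μ.map (ε i) = μ.map (ε i₀)) (hε₂ : Integrable (fun ω => (ε i₀ ω : ℝ) ^ 2) μ)
    (hZ : ∀ i r, Measurable (Z i r))
    (hindep : IndepFun (fun ω i => ε i ω) (fun ω (ir : ι × ℕ) => Z ir.1 ir.2 ω) μ)
    (hZiid : iIndepFun (fun ir : ι × ℕ => Z ir.1 ir.2) μ)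
    (hZcomp : ∀ i r, iIndepFun (fun c ω => Z i r ω c) μ)
    {S S' : Finset γ} (σ σ' : γ → ι) (hσ : ∀ c ∈ S, ∀ c' ∈ S', σ c = σ' c' → c ≠ c')
    {m : γ → ℝ≥0∞} (hm : ∀ c ∈ S, ∀ i r, ∫⁻ ω, (Z i r ω c : ℝ≥0∞) ∂μ = m c)
    (hm' : ∀ c ∈ S', ∀ i r, ∫⁻ ω, (Z i r ω c : ℝ≥0∞) ∂μ = m c)
    (hm_top : ∀ c, m c ≠ ⊤) :
    ∫ ω, ((∑ c ∈ S, thinning ε Z (σ c) c ω : ℕ) : ℝ)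
        * ((∑ c ∈ S', thinning ε Z (σ' c) c ω : ℕ) : ℝ) ∂μ
      - (∫ ω, ((∑ c ∈ S, thinning ε Z (σ c) c ω : ℕ) : ℝ) ∂μ)
        * ∫ ω, ((∑ c ∈ S', thinning ε Z (σ' c) c ω : ℕ) : ℝ) ∂μ
      = variance (fun ω => (ε i₀ ω : ℝ)) μ
        * ∑ x ∈ S ×ˢ S' with σ x.1 = σ' x.2, (m x.1).toReal * (m x.2).toReal := by
  have hε₁ := (memLp_two_natCast (hε i₀) hε₂).integrable one_le_two
  rw [integral_sum_thinning_mul_sum_thinning hε hεiid hid hε₂ hZ hindep hZiid hZcomp σ σ' hσ hm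
      hm' hm_top,
    integral_sum_thinning hε hZ hindep hid hε₁ σ hm hm_top,
    integral_sum_thinning hε hZ hindep hid hε₁ σ' hm' hm_top,
    sum_ite_mul_sub_sum_mul_sum S S' (fun x => σ x.1 = σ' x.2) fun c => (m c).toReal,
    variance_eq_sub (memLp_two_natCast (hε i₀) hε₂)]
  rfl

end Thinning

def site (s t : ℤ) (c : ℕ × ℕ) : ℤ × ℤ := (s - c.1, t - c.2)

theorem sum_filter_site_eq (q1 q2 k l : ℕ) (s t : ℤ) (b : ℕ × ℕ → ℝ) :
    ∑ x ∈ (range (q1 + 1) ×ˢ range (q2 + 1)) ×ˢ (range (q1 + 1) ×ˢ range (q2 + 1)) with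
        site s t x.1 = site (s - k) (t - l) x.2, b x.1 * b x.2
      = ∑ i ∈ Icc k q1, ∑ j ∈ Icc l q2, b (i, j) * b (i - k, j - l) := by
  rw [← sum_product']
  refine sum_nbij' (fun x => x.1) (fun c => (c, (c.1 - k, c.2 - l))) ?_ ?_ ?_ (by simp) ?_
  all_goals simp only [mem_filter, mem_product, mem_range, mem_Icc, site, Prod.ext_iff,
    Prod.forall, true_and]
  iterate 3
    · intros
      omega
  · intro i j i' j' hx
    obtain rfl : i' = i - k := by omega
    obtain rfl : j' = j - l := by omega
    rfl

theorem inma_independence_model_acvf_general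
    {Ω : Type*} [MeasurableSpace Ω] (P : Measure Ω) [IsProbabilityMeasure P]
    (q1 q2 : ℕ)
    (β : ℕ → ℕ → ℝ)
    (hβ : ∀ i ≤ q1, ∀ j ≤ q2, β i j ∈ Set.Icc (0 : ℝ) 1)
    -- the i.i.d. innovations, with finite mean and variance
    (ε : ℤ × ℤ → Ω → ℕ) (hεmeas : ∀ p, Measurable (ε p))
    (hεiid : iIndepFun ε P)
    (hεid : ∀ p, Measure.map (ε p) P = Measure.map (ε (0, 0)) P)
    (hεL2 : Integrable (fun ω => ((ε (0, 0) ω : ℝ)) ^ 2) P)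
    (σε2 : ℝ) (hσε2 : σε2 = variance (fun ω => (ε (0, 0) ω : ℝ)) P)
    -- the counting-series vectors, i.i.d., with {0,1}-valued components
    (Z : ℤ × ℤ → ℕ → Ω → ℕ × ℕ → ℕ)
    (hZmeas : ∀ p r, Measurable (Z p r))
    (hZ01 : ∀ p r ω ij, Z p r ω ij ≤ 1)
    (hZiid : iIndepFun
      (fun pr : (ℤ × ℤ) × ℕ => Z pr.1 pr.2) P)
    (hZβ : ∀ p r, ∀ i ≤ q1, ∀ j ≤ q2,
      P {ω | Z p r ω (i, j) = 1} = ENNReal.ofReal (β i j))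
    -- the whole thinning family is independent of the innovation family
    (hindep : IndepFun (fun ω p => ε p ω)
      (fun ω (pr : (ℤ × ℤ) × ℕ) => Z pr.1 pr.2 ω) P)
    -- the INMA(q1,q2) random field
    (X : ℤ → ℤ → Ω → ℕ)
    (hX : ∀ s t ω, X s t ω =
      ∑ i ∈ range (q1 + 1), ∑ j ∈ range (q2 + 1),
        ∑ r ∈ range (ε (s - (i : ℤ), t - (j : ℤ)) ω),
          Z (s - (i : ℤ), t - (j : ℤ)) r ω (i, j))
    -- independence model: the components within each vector Z_{s,t;r} are mutually independent
    (hZcomp : ∀ p r, iIndepFun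
      (fun ij : ℕ × ℕ => fun ω => Z p r ω ij) P)
    (s t : ℤ) (k l : ℕ) (hkl : (k, l) ≠ (0, 0)) :
    (∫ ω, (X s t ω : ℝ) * (X (s - (k : ℤ)) (t - (l : ℤ)) ω : ℝ) ∂P)
      - (∫ ω, (X s t ω : ℝ) ∂P) * (∫ ω, (X (s - (k : ℤ)) (t - (l : ℤ)) ω : ℝ) ∂P) =
      σε2 * ∑ i ∈ Icc k q1, ∑ j ∈ Icc l q2, β i j * β (i - k) (j - l) := by
  set R := range (q1 + 1) ×ˢ range (q2 + 1)
  have hXsum (s t : ℤ) : X s t = fun ω => ∑ c ∈ R, thinning ε Z (site s t c) c ω :=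
    funext fun ω => by rw [hX, ← sum_product']; rfl
  have hm : ∀ c ∈ R, ∀ p r, ∫⁻ ω, (Z p r ω c : ℝ≥0∞) ∂P = ENNReal.ofReal (β c.1 c.2) := by
    rintro ⟨i, j⟩ hc p r
    rw [mem_product, mem_range, mem_range] at hc
    rw [lintegral_natCast_of_le_one (f := fun ω => Z p r ω (i, j))
      ((measurable_pi_apply _).comp (hZmeas p r)) (hZ01 p r · _),
      hZβ p r i (by omega) j (by omega)]
  have hlag : ∀ c ∈ R, ∀ c' ∈ R, site s t c = site (s - k) (t - l) c' → c ≠ c' := by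
    rintro c - c' - h rfl
    simp only [site, ne_eq, Prod.ext_iff] at h hkl
    omega
  simp only [hXsum]
  rw [covariance_sum_thinning hεmeas hεiid hεid hεL2 hZmeas hindep hZiid hZcomp _ _ hlag hm hm
      fun _ => ENNReal.ofReal_ne_top,
    sum_filter_site_eq q1 q2 k l s t fun c => (ENNReal.ofReal (β c.1 c.2)).toReal, hσε2]
  refine congrArg _ (sum_congr rfl fun i hi => sum_congr rfl fun j hj => ?_)
  rw [mem_Icc] at hi hj
  rw [ENNReal.toReal_ofReal (hβ i hi.2 j hj.2).1,
    ENNReal.toReal_ofReal (hβ _ (by omega) _ (by omega)).1]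

/-- Independence model: the ACvF equals `σ_ε² ∑∑ β_{ij} β_{i-k,j-l}` for (k,l) ≠ (0,0). -/
theorem inma_independence_model_acvf
    {Ω : Type*} [MeasurableSpace Ω] (P : Measure Ω) [IsProbabilityMeasure P]
    (q1 q2 : ℕ) (hq : 1 ≤ q1 + q2)
    (β : ℕ → ℕ → ℝ)
    (hβ : ∀ i ≤ q1, ∀ j ≤ q2, β i j ∈ Set.Icc (0 : ℝ) 1)
    -- the i.i.d. innovations, with finite mean and variance
    (ε : ℤ × ℤ → Ω → ℕ) (hεmeas : ∀ p, Measurable (ε p))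
    (hεiid : iIndepFun ε P)
    (hεid : ∀ p, Measure.map (ε p) P = Measure.map (ε (0, 0)) P)
    (hεL2 : Integrable (fun ω => ((ε (0, 0) ω : ℝ)) ^ 2) P)
    (με : ℝ) (hμε : με = ∫ ω, (ε (0, 0) ω : ℝ) ∂P)
    (σε2 : ℝ) (hσε2 : σε2 = variance (fun ω => (ε (0, 0) ω : ℝ)) P)
    -- the counting-series vectors, i.i.d., with {0,1}-valued components
    (Z : ℤ × ℤ → ℕ → Ω → ℕ × ℕ → ℕ)
    (hZmeas : ∀ p r, Measurable (Z p r))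
    (hZ01 : ∀ p r ω ij, Z p r ω ij ≤ 1)
    (hZiid : iIndepFun
      (fun pr : (ℤ × ℤ) × ℕ => Z pr.1 pr.2) P)
    (hZid : ∀ p r, Measure.map (Z p r) P = Measure.map (Z (0, 0) 0) P)
    (hZβ : ∀ p r, ∀ i ≤ q1, ∀ j ≤ q2,
      P {ω | Z p r ω (i, j) = 1} = ENNReal.ofReal (β i j))
    -- the whole thinning family is independent of the innovation family
    (hindep : IndepFun (fun ω p => ε p ω)
      (fun ω (pr : (ℤ × ℤ) × ℕ) => Z pr.1 pr.2 ω) P)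
    -- the INMA(q1,q2) random field
    (X : ℤ → ℤ → Ω → ℕ)
    (hX : ∀ s t ω, X s t ω =
      ∑ i ∈ range (q1 + 1), ∑ j ∈ range (q2 + 1),
        ∑ r ∈ range (ε (s - (i : ℤ), t - (j : ℤ)) ω),
          Z (s - (i : ℤ), t - (j : ℤ)) r ω (i, j))
    -- independence model: the components within each vector Z_{s,t;r} are mutually independent
    (hZcomp : ∀ p r, iIndepFun
      (fun ij : ℕ × ℕ => fun ω => Z p r ω ij) P)
    (s t : ℤ) (k l : ℕ) (hk : k ≤ q1) (hl : l ≤ q2) (hkl : (k, l) ≠ (0, 0)) :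
    (∫ ω, (X s t ω : ℝ) * (X (s - (k : ℤ)) (t - (l : ℤ)) ω : ℝ) ∂P)
      - (∫ ω, (X s t ω : ℝ) ∂P) * (∫ ω, (X (s - (k : ℤ)) (t - (l : ℤ)) ω : ℝ) ∂P) =
      σε2 * ∑ i ∈ Icc k q1, ∑ j ∈ Icc l q2, β i j * β (i - k) (j - l) :=
  inma_independence_model_acvf_general P q1 q2 β hβ ε hεmeas hεiid hεid hεL2 σε2 hσε2 Z hZmeas hZ01
    hZiid hZβ hindep X hX hZcomp s t k l hkl
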